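/- arXiv:2012.02491 — 2 statements merged into one kernel-verified Lean document; each statement's English description precedes it below -/
import Mathlib

section
/- Consider a seller with high-demand probability p ∈ [0,1], quota Q_i, demands d_l < Q_i < d_ह := d_h, facing clearing price π with θ ≤ π ≤ κ, whose payoff from selling quantity q ≥ 0 (all of which is transacted) is u(q) = (π − θ)·q − p·κ·max(0, d_h − (Q_i − q)) − (1 − p)·κ·max(0, d_l − (Q_i − q)). If p ≤ (π − θ)/κ, then q = Q_i − d_l maximizes u over [0, ∞); if p > (π − θ)/κ, then u(q) ≤ u(0) for all q ∈ [0, Q_i − d_l]. -/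
/-- Seller's optimal quantity. If `p ≤ (π − θ)/κ` then `q = Q_i − d_l` maximizes the
seller's payoff over `[0, ∞)`; if `p > (π − θ)/κ` then not selling at all is at least
as good as selling any quantity `q ∈ [0, Q_i − d_l]`. -/
theorem seller_best_quantity (p Qi dl dh κ π θ : ℝ)
    (hp0 : 0 ≤ p) (hp1 : p ≤ 1)
    (hdl0 : 0 < dl) (hdl : dl < Qi) (hdh : Qi < dh)
    (hθ0 : 0 ≤ θ) (hθπ : θ ≤ π) (hπκ : π ≤ κ)
    (u : ℝ → ℝ)
    (hu : ∀ q : ℝ, u q = (π - θ) * q - p * κ * max 0 (dh - (Qi - q))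
                        - (1 - p) * κ * max 0 (dl - (Qi - q))) :
    (p ≤ (π - θ) / κ → ∀ q : ℝ, 0 ≤ q → u q ≤ u (Qi - dl)) ∧
    (p > (π - θ) / κ → ∀ q : ℝ, 0 ≤ q → q ≤ Qi - dl → u q ≤ u 0) := by
  have hκ0 : 0 ≤ κ := le_trans (le_trans hθ0 hθπ) hπκ
  constructor
  · intro hp q hq
    have hpκ : p * κ ≤ π - θ := by
      rcases hκ0.eq_or_lt with h | h
      · nlinarith
      · have := (le_div_iff₀ h).mp hp
        linarith
    rw [hu q, hu (Qi - dl)]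
    have h1 : max 0 (dh - (Qi - q)) = dh - (Qi - q) :=
      max_eq_right (by linarith)
    have h2 : max 0 (dh - (Qi - (Qi - dl))) = dh - (Qi - (Qi - dl)) :=
      max_eq_right (by linarith)
    have h3 : max 0 (dl - (Qi - (Qi - dl))) = 0 :=
      max_eq_left (by linarith)
    rw [h1, h2, h3]
    rcases le_or_gt q (Qi - dl) with hc | hc
    · have h4 : max 0 (dl - (Qi - q)) = 0 := max_eq_left (by linarith)
      rw [h4]; nlinarith
    · have h4 : max 0 (dl - (Qi - q)) = dl - (Qi - q) :=
        max_eq_right (by linarith)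
      rw [h4]; nlinarith
  · intro hp q hq hq'
    have hpκ : π - θ ≤ p * κ := by
      rcases hκ0.eq_or_lt with h | h
      · nlinarith
      · have := (div_lt_iff₀ h).mp hp
        linarith
    rw [hu q, hu 0]
    have h1 : max 0 (dh - (Qi - q)) = dh - (Qi - q) :=
      max_eq_right (by linarith)
    have h2 : max 0 (dh - (Qi - 0)) = dh - (Qi - 0) :=
      max_eq_right (by linarith)
    have h3 : max 0 (dl - (Qi - 0)) = 0 := max_eq_left (by linarith)
    have h4 : max 0 (dl - (Qi - q)) = 0 := max_eq_left (by linarith)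
    rw [h1, h2, h3, h4]; nlinarith
end

section
/- Consider a buyer with high-demand probability p ∈ [0,1], quota Q_i, demands d_l < Q_i < d_h, facing clearing price π ∈ [0, κ], whose payoff from buying quantity q ≥ 0 (all transacted) is u(q) = −π·q − p·κ·max(0, d_h − (Q_i + q)) − (1 − p)·κ·max(0, d_l − (Q_i + q)). If p ≥ π/κ, then q = d_h − Q_i maximizes u over [0, ∞); if p < π/κ, then u(q) ≤ u(0) for all q ≥ 0. -/
/-- Buyer's optimal quantity. If `p ≥ π/κ` then `q = d_h − Q_i` maximizes the buyer's
payoff over `[0, ∞)`; if `p < π/κ` then not buying at all is at least as good. -/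
theorem buyer_best_quantity (p Qi dl dh κ π : ℝ)
    (hp0 : 0 ≤ p) (hp1 : p ≤ 1)
    (hdl0 : 0 < dl) (hdl : dl < Qi) (hdh : Qi < dh)
    (hπ0 : 0 ≤ π) (hπκ : π ≤ κ)
    (u : ℝ → ℝ)
    (hu : ∀ q : ℝ, u q = -π * q - p * κ * max 0 (dh - (Qi + q))
                        - (1 - p) * κ * max 0 (dl - (Qi + q))) :
    (p ≥ π / κ → ∀ q : ℝ, 0 ≤ q → u q ≤ u (dh - Qi)) ∧
    (p < π / κ → ∀ q : ℝ, 0 ≤ q → u q ≤ u 0) := by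
  have hκ0 : 0 ≤ κ := le_trans hπ0 hπκ
  constructor
  · intro hpge q hq
    have hpκ : π ≤ p * κ := by
      rcases eq_or_lt_of_le hκ0 with h | h
      · nlinarith
      · have := (div_le_iff₀ h).mp hpge
        linarith
    rw [hu q, hu (dh - Qi)]
    have h1 : max 0 (dl - (Qi + q)) = 0 := max_eq_left (by linarith)
    have h2 : max 0 (dl - (Qi + (dh - Qi))) = 0 := max_eq_left (by linarith)
    have h3 : max 0 (dh - (Qi + (dh - Qi))) = 0 := max_eq_left (by linarith)
    rw [h1, h2, h3]
    rcases le_or_gt (dh - (Qi + q)) 0 with h4 | h4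
    · rw [max_eq_left h4]; nlinarith
    · rw [max_eq_right h4.le]; nlinarith
  · intro hplt q hq
    have hκ : 0 < κ := by
      by_contra h
      push_neg at h
      have : κ = 0 := le_antisymm h hκ0
      rw [this] at hplt; simp at hplt; linarith
    have hpκ : p * κ < π := by
      have := (lt_div_iff₀ hκ).mp hplt
      linarith
    rw [hu q, hu 0]
    have h1 : max 0 (dl - (Qi + q)) = 0 := max_eq_left (by linarith)
    have h2 : max 0 (dl - (Qi + 0)) = 0 := max_eq_left (by linarith)
    have h3 : max 0 (dh - (Qi + 0)) = dh - (Qi + 0) := max_eq_right (by linarith)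
    rw [h1, h2, h3]
    rcases le_or_gt (dh - (Qi + q)) 0 with h4 | h4
    · rw [max_eq_left h4]; nlinarith
    · rw [max_eq_right h4.le]; nlinarith
end
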